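/- Let A, B and C be three rings with B and C commutative. Let g : A → B and f : B → C be two central ℤ-linear maps. Let n ≥ 2 and a_1, …, a_n ∈ A. For each i ∈ [n−1], define (a_1^{(i)}, …, a_{n-1}^{(i)}) := (a_1, …, a_{i-1}, a_i·a_n, a_{i+1}, …, a_{n-1}); for a subset P = {p_1, …, p_r} of [n] set b_P := g_r(a_{p_1}, …, a_{p_r}), and for P ⊆ [n−1] set b_P^{(i)} := g_r(a_{p_1}^{(i)}, …, a_{p_r}^{(i)}). Let del : Π_{[n]} → Π_{[n-1]} send each set partition π of [n] to the partition of [n−1] obtained by deleting n from its block (removing the block if it becomes empty). Then for every set partition ω = {Q_1, …, Q_ℓ} of [n−1]: Σ_{π = {P_1, …, P_k} ∈ Π_{[n]}, del(π) = ω} f_k(b_{P_1}, …, b_{P_k}) = f(g(a_n)) · f_ℓ(b_{Q_1}, …, b_{Q_ℓ}) − Σ_{i=1}^{n-1} f_ℓ(b_{Q_1}^{(i)}, …, b_{Q_ℓ}^{(i)}). -/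

import Mathlib

open scoped Classical

noncomputable section

/-- A `ℤ`-linear map `f : A → B` is *central* if `f (a * a') = f (a' * a)` for all `a, a'`. -/
def Central {A B : Type*} [Ring A] [CommRing B] (f : A →ₗ[ℤ] B) : Prop :=
  ∀ a a' : A, f (a * a') = f (a' * a)

/-- The product `a x * a (σ x) * a (σ² x) * ⋯` along the cycle of the permutation `σ`
containing `x`, starting at `x` (the cycle has length `Function.minimalPeriod σ x`). -/
def cycleProdAt {ι A : Type*} [Ring A] (a : ι → A) (σ : Equiv.Perm ι) (x : ι) : A :=
  ((List.range (Function.minimalPeriod (⇑σ) x)).map (fun j => a ((σ ^ j) x))).prod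

/-- The Frobenius map of a central `ℤ`-linear map `f : A → B`, applied to a finite family
`a : ι → A`:  `∑_{σ} sgn σ • ∏_{cycles c of σ} f (a_{i₁} a_{i₂} ⋯ a_{i_k})`, where each cycle
is represented by the product along it starting from its distinguished element (the one
minimizing a fixed enumeration of `ι`); when `f` is central this agrees with the classical
definition, which is independent of the starting points. -/
def frob {ι A B : Type*} [Fintype ι] [DecidableEq ι] [Ring A] [CommRing B]
    (f : A →ₗ[ℤ] B) (a : ι → A) : B :=
  ∑ σ : Equiv.Perm ι, (Equiv.Perm.sign σ : ℤ) •
    ∏ x : ι,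
      if ∀ j : ℕ, (Fintype.equivFin ι) x ≤ (Fintype.equivFin ι) ((σ ^ j) x)
      then f (cycleProdAt a σ x) else 1

/-- `f` is an `n`-homomorphism if it is central and its `(n+1)`-Frobenius map vanishes. -/
def IsNHom {A B : Type*} [Ring A] [CommRing B] (n : ℕ) (f : A →ₗ[ℤ] B) : Prop :=
  Central f ∧ ∀ a : Fin (n + 1) → A, frob f a = 0

/-- `π` is a set partition of the finite set `J`: its blocks are nonempty, pairwise
disjoint, and their union is `J`. -/
def IsSetPartition {α : Type*} [DecidableEq α] (J : Finset α) (π : Finset (Finset α)) : Prop :=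
  (∀ P ∈ π, P.Nonempty) ∧
  (∀ P ∈ π, ∀ Q ∈ π, P ≠ Q → Disjoint P Q) ∧
  π.biUnion id = J

/-- Delete the element `n` from the block of `π` containing it (removing the block if it
becomes empty). -/
def delPart (n : ℕ) (π : Finset (Finset ℕ)) : Finset (Finset ℕ) :=
  (π.image (fun P => P.erase n)).erase ∅

/-!
Expanding `f_{k+1}(a₁, …, a_k, d)` according to the image of the new index gives the recursion
`f_{k+1}(a, d) = f(d) f_k(a) - ∑ᵢ f_k(a₁, …, aᵢ d, …, a_k)`: the permutations fixing the new
index contribute `f(d) f_k(a)`, and inserting the new index right after `i` in a cycle of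
`τ ∈ S_k` flips the sign and turns that cycle product into the one of `τ` with `aᵢ` replaced
by `aᵢ d`. Centrality makes `f` of a cycle product independent of its starting point, so the
cycle minima used in `frob` may be replaced by any transversal of the cycles, chosen to suit
each computation.

The partitions `π` with `del π = ω` are `ω ∪ {{n}}` and, for each block `Q` of `ω`, the
partition obtained by adding `n` to `Q`. Applying the recursion to `f` at the block `{n}` and
to `g` at the block `Q ∪ {n}`, and using that `f_ℓ` is additive in each argument, the terms
`f_ℓ(…, b_Q g(aₙ), …)` cancel and the remaining ones regroup into the sum over `i ∈ [n-1]`.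
-/

open Equiv Function Finset

namespace Equiv.Perm

variable {ι κ : Type*}

theorem mem_periodicPts_of_finite [Finite ι] (σ : Perm ι) (x : ι) : x ∈ periodicPts σ := by
  rw [injective_iff_periodicPts_eq_univ.mp σ.injective]
  trivial

theorem minimalPeriod_pos_of_finite [Finite ι] (σ : Perm ι) (x : ι) : 0 < minimalPeriod σ x :=
  minimalPeriod_pos_of_mem_periodicPts (σ.mem_periodicPts_of_finite x)

theorem pow_minimalPeriod_apply (σ : Perm ι) (x : ι) : (σ ^ minimalPeriod σ x) x = x :=
  iterate_minimalPeriod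

theorem minimalPeriod_apply_self [Finite ι] (σ : Perm ι) (x : ι) :
    minimalPeriod σ (σ x) = minimalPeriod σ x :=
  minimalPeriod_apply (σ.mem_periodicPts_of_finite x)

theorem pow_apply_injOn_minimalPeriod (σ : Perm ι) (x : ι) {j k : ℕ}
    (hj : j < minimalPeriod σ x) (hk : k < minimalPeriod σ x) (h : (σ ^ j) x = (σ ^ k) x) :
    j = k :=
  iterate_injOn_Iio_minimalPeriod hj hk h

theorem minimalPeriod_eq_of_pow_apply [Finite ι] {σ : Perm ι} {x : ι} {T : ℕ} (hT : 0 < T)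
    (hper : (σ ^ T) x = x) (hmin : ∀ m, 0 < m → m < T → (σ ^ m) x ≠ x) :
    minimalPeriod σ x = T := by
  refine le_antisymm (IsPeriodicPt.minimalPeriod_le hT hper) (not_lt.mp fun hlt => ?_)
  exact hmin _ (σ.minimalPeriod_pos_of_finite x) hlt (σ.pow_minimalPeriod_apply x)

theorem SameCycle.exists_pow_eq_of_lt_minimalPeriod [Finite ι] {σ : Perm ι} {x y : ι}
    (h : σ.SameCycle x y) : ∃ j < minimalPeriod σ x, (σ ^ j) x = y := by
  obtain ⟨k, -, rfl⟩ := h.exists_pow_eq'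
  exact ⟨k % _, Nat.mod_lt _ (σ.minimalPeriod_pos_of_finite x), iterate_mod_minimalPeriod_eq⟩

theorem SameCycle.map_of_forall_sameCycle [Finite ι] {σ : Perm ι} {τ : Perm κ} {φ : ι → κ}
    (h : ∀ z, τ.SameCycle (φ z) (φ (σ z))) {x y : ι} (hxy : σ.SameCycle x y) :
    τ.SameCycle (φ x) (φ y) := by
  obtain ⟨k, -, rfl⟩ := hxy.exists_pow_eq'
  clear hxy
  induction k with
  | zero => exact SameCycle.refl _ _
  | succ k ih => rw [pow_succ', Perm.mul_apply]; exact ih.trans (h _)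

theorem sameCycle_map_iff [Finite ι] [Finite κ] {σ : Perm ι} {τ : Perm κ} {φ : ι → κ}
    (hφ : Injective φ) (h : Semiconj φ σ τ) {x y : ι} :
    τ.SameCycle (φ x) (φ y) ↔ σ.SameCycle x y := by
  refine ⟨fun hxy => ?_, SameCycle.map_of_forall_sameCycle fun z => ?_⟩
  · obtain ⟨k, -, hk⟩ := hxy.exists_pow_eq'
    exact ⟨k, by rw [zpow_natCast]; exact hφ (((h.iterate_right k) x).trans hk)⟩
  · rw [h z]
    exact sameCycle_apply_right.mpr (.refl _ _)

end Equiv.Perm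

section CycleProducts

variable {ι κ A B : Type*}

def orbitProd [Monoid A] (a : ι → A) (σ : Perm ι) (x : ι) (k : ℕ) : A :=
  ((List.range k).map fun j => a ((σ ^ j) x)).prod

theorem cycleProdAt_eq_orbitProd [Ring A] (a : ι → A) (σ : Perm ι) (x : ι) :
    cycleProdAt a σ x = orbitProd a σ x (minimalPeriod σ x) := rfl

section Monoid
variable [Monoid A]

theorem orbitProd_one (a : ι → A) (σ : Perm ι) (x : ι) : orbitProd a σ x 1 = a x := by
  simp [orbitProd]

theorem orbitProd_add (a : ι → A) (σ : Perm ι) (x : ι) (j k : ℕ) :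
    orbitProd a σ x (j + k) = orbitProd a σ x j * orbitProd a σ ((σ ^ j) x) k := by
  simp only [orbitProd, List.range_add, List.map_append, List.prod_append, List.map_map]
  congr 3
  ext i
  rw [comp_apply, ← Perm.mul_apply, ← pow_add, add_comm]

theorem orbitProd_succ (a : ι → A) (σ : Perm ι) (x : ι) (k : ℕ) :
    orbitProd a σ x (k + 1) = orbitProd a σ x k * a ((σ ^ k) x) := by
  rw [orbitProd_add, orbitProd_one]

theorem orbitProd_succ' (a : ι → A) (σ : Perm ι) (x : ι) (k : ℕ) :
    orbitProd a σ x (k + 1) = a x * orbitProd a σ (σ x) k := by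
  rw [add_comm, orbitProd_add, orbitProd_one, pow_one]

theorem orbitProd_congr {a : ι → A} {b : κ → A} {σ : Perm ι} {τ : Perm κ} {x : ι} {y : κ}
    {k : ℕ} (h : ∀ j < k, a ((σ ^ j) x) = b ((τ ^ j) y)) :
    orbitProd a σ x k = orbitProd b τ y k := by
  unfold orbitProd
  congr 1
  exact List.map_congr_left fun j hj => h j (List.mem_range.mp hj)

end Monoid

variable [Ring A]

theorem cycleProdAt_map_of_pow_apply {φ : ι → κ} (hφ : Injective φ) {σ : Perm ι}
    {τ : Perm κ} {x : ι} (h : ∀ k : ℕ, (τ ^ k) (φ x) = φ ((σ ^ k) x)) (b : κ → A) :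
    cycleProdAt b τ (φ x) = cycleProdAt (fun z => b (φ z)) σ x := by
  have hT : minimalPeriod τ (φ x) = minimalPeriod σ x := by
    rw [minimalPeriod_eq_minimalPeriod_iff]
    intro k
    change (τ ^ k) (φ x) = φ x ↔ (σ ^ k) x = x
    rw [h, hφ.eq_iff]
  rw [cycleProdAt_eq_orbitProd, cycleProdAt_eq_orbitProd, hT]
  exact orbitProd_congr fun j _ => by rw [h]

theorem cycleProdAt_update_of_not_sameCycle [DecidableEq ι] (a : ι → A) {σ : Perm ι}
    {i x : ι} (h : ¬σ.SameCycle i x) (c : A) :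
    cycleProdAt (update a i c) σ x = cycleProdAt a σ x :=
  orbitProd_congr fun j _ => update_of_ne (fun hj => h ⟨-j, by simp [← hj]⟩) _ _

theorem exists_cycleProdAt_update_eq_mul [Finite ι] [DecidableEq ι] (a : ι → A) {σ : Perm ι}
    {i x : ι} (h : σ.SameCycle x i) : ∃ p s : A, ∀ c,
      cycleProdAt (update a i c) σ x = p * c * s := by
  obtain ⟨j, hj, rfl⟩ := h.exists_pow_eq_of_lt_minimalPeriod
  obtain ⟨r, hr⟩ := Nat.exists_eq_add_of_lt hj
  have hne : ∀ k < minimalPeriod σ x, k ≠ j → (σ ^ k) x ≠ (σ ^ j) x := fun k hk hkj heq =>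
    hkj (σ.pow_apply_injOn_minimalPeriod x hk hj heq)
  refine ⟨orbitProd a σ x j, orbitProd a σ (σ ((σ ^ j) x)) r, fun c => ?_⟩
  have hp : orbitProd (update a ((σ ^ j) x) c) σ x j = orbitProd a σ x j :=
    orbitProd_congr fun k hk => update_of_ne (hne k (by omega) hk.ne) _ _
  have hs : orbitProd (update a ((σ ^ j) x) c) σ (σ ((σ ^ j) x)) r =
      orbitProd a σ (σ ((σ ^ j) x)) r := by
    refine orbitProd_congr fun k hk => update_of_ne ?_ _ _
    rw [← Perm.mul_apply, ← pow_succ, ← Perm.mul_apply, ← pow_add]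
    exact hne _ (by omega) (by omega)
  rw [cycleProdAt_eq_orbitProd, hr, add_assoc, orbitProd_add, orbitProd_succ', update_self, hp,
    hs, mul_assoc]

variable [Finite ι] [CommRing B] {f : A →ₗ[ℤ] B}

theorem Central.cycleProdAt_apply (hf : Central f) (a : ι → A) (σ : Perm ι) (x : ι) :
    f (cycleProdAt a σ (σ x)) = f (cycleProdAt a σ x) := by
  obtain ⟨T, hT⟩ := Nat.exists_eq_add_one_of_ne_zero (σ.minimalPeriod_pos_of_finite x).ne'
  have hx : (σ ^ T) (σ x) = x := by
    rw [← Perm.mul_apply, ← pow_succ, ← hT, σ.pow_minimalPeriod_apply]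
  rw [cycleProdAt_eq_orbitProd, cycleProdAt_eq_orbitProd, σ.minimalPeriod_apply_self, hT,
    orbitProd_succ, orbitProd_succ', hx]
  exact hf _ _

theorem Central.cycleProdAt_of_sameCycle (hf : Central f) (a : ι → A) {σ : Perm ι} {x y : ι}
    (h : σ.SameCycle x y) : f (cycleProdAt a σ x) = f (cycleProdAt a σ y) := by
  obtain ⟨k, -, rfl⟩ := h.exists_pow_eq'
  clear h
  induction k with
  | zero => rfl
  | succ k ih => rw [ih, pow_succ', Perm.mul_apply, hf.cycleProdAt_apply]

end CycleProducts

section Transversals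

variable {ι κ : Type*}

def IsCycleTransversal (σ : Perm ι) (p : ι → Prop) : Prop :=
  ∀ x, ∃! y, σ.SameCycle x y ∧ p y

theorem IsCycleTransversal.prod_eq [Fintype ι] {M : Type*} [CommMonoid M] {σ : Perm ι}
    {p q : ι → Prop} (hp : IsCycleTransversal σ p) (hq : IsCycleTransversal σ q) (G : ι → M)
    (hG : ∀ x y, σ.SameCycle x y → G x = G y) :
    ∏ x, (if p x then G x else 1) = ∏ x, (if q x then G x else 1) := by
  rw [← prod_filter, ← prod_filter]
  refine prod_nbij' (fun x => (hq x).choose) (fun y => (hp y).choose) ?_ ?_ ?_ ?_ ?_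
  · exact fun x _ => by simpa using (hq x).choose_spec.1.2
  · exact fun y _ => by simpa using (hp y).choose_spec.1.2
  · intro x hx
    exact (hp _).unique (hp _).choose_spec.1 ⟨(hq x).choose_spec.1.1.symm, (mem_filter.mp hx).2⟩
  · intro y hy
    exact (hq _).unique (hq _).choose_spec.1 ⟨(hp y).choose_spec.1.1.symm, (mem_filter.mp hy).2⟩
  · exact fun x _ => hG _ _ (hq x).choose_spec.1.1

theorem IsCycleTransversal.withRep {σ : Perm ι} {p : ι → Prop} (hp : IsCycleTransversal σ p)
    (i : ι) : IsCycleTransversal σ (fun y => y = i ∨ ¬σ.SameCycle i y ∧ p y) := by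
  intro x
  by_cases hxi : σ.SameCycle x i
  · refine ⟨i, ⟨hxi, Or.inl rfl⟩, ?_⟩
    rintro y ⟨hxy, rfl | ⟨hiy, -⟩⟩
    exacts [rfl, (hiy (hxi.symm.trans hxy)).elim]
  · obtain ⟨y, ⟨hxy, hy⟩, huniq⟩ := hp x
    refine ⟨y, ⟨hxy, Or.inr ⟨fun hiy => hxi (hxy.trans hiy.symm), hy⟩⟩, ?_⟩
    rintro z ⟨hxz, rfl | ⟨-, hz⟩⟩
    exacts [(hxi hxz).elim, huniq z ⟨hxz, hz⟩]

theorem IsCycleTransversal.comp_symm {σ : Perm ι} {τ : Perm κ} {p : ι → Prop}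
    (hp : IsCycleTransversal σ p) (e : ι ≃ κ)
    (he : ∀ x y, τ.SameCycle (e x) (e y) ↔ σ.SameCycle x y) :
    IsCycleTransversal τ (fun y => p (e.symm y)) := by
  intro x
  obtain ⟨y, ⟨hxy, hy⟩, huniq⟩ := hp (e.symm x)
  refine ⟨e y, ⟨by simpa using (he _ _).2 hxy, by simpa using hy⟩, fun z ⟨hxz, hz⟩ => ?_⟩
  rw [← huniq (e.symm z) ⟨(he _ _).1 (by simpa using hxz), hz⟩, apply_symm_apply]

theorem IsCycleTransversal.option_elim_false {σ : Perm (Option ι)} {τ : Perm ι}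
    {p : ι → Prop} (hp : IsCycleTransversal τ p)
    (hσ : ∀ x y, σ.SameCycle (some x) (some y) ↔ τ.SameCycle x y) {y₀ : ι}
    (hy₀ : σ.SameCycle none (some y₀)) :
    IsCycleTransversal σ (fun o => o.elim False p) := by
  intro o
  obtain ⟨y, hoy⟩ : ∃ y, σ.SameCycle o (some y) := by
    cases o with
    | none => exact ⟨y₀, hy₀⟩
    | some x => exact ⟨x, .refl _ _⟩
  obtain ⟨r, ⟨hyr, hr⟩, huniq⟩ := hp y
  refine ⟨some r, ⟨hoy.trans ((hσ y r).2 hyr), hr⟩, ?_⟩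
  rintro (_ | z) ⟨hoz, hz⟩
  · exact hz.elim
  · exact congrArg some (huniq z ⟨(hσ y z).1 (hoy.symm.trans hoz), hz⟩)

def IsCycleMin [Fintype ι] (σ : Perm ι) (x : ι) : Prop :=
  ∀ j : ℕ, Fintype.equivFin ι x ≤ Fintype.equivFin ι ((σ ^ j) x)

theorem isCycleTransversal_isCycleMin [Fintype ι] (σ : Perm ι) :
    IsCycleTransversal σ (IsCycleMin σ) := by
  have hle : ∀ z w, IsCycleMin σ z → σ.SameCycle z w →
      Fintype.equivFin ι z ≤ Fintype.equivFin ι w := by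
    rintro z _ hz hzw
    obtain ⟨k, -, rfl⟩ := hzw.exists_pow_eq'
    exact hz k
  intro x
  obtain ⟨y, hy, hmin⟩ := (univ.filter (σ.SameCycle x)).exists_min_image
    (Fintype.equivFin ι) ⟨x, mem_filter.mpr ⟨mem_univ _, .refl _ _⟩⟩
  rw [mem_filter] at hy
  refine ⟨y, ⟨hy.2, fun j => hmin _
    (mem_filter.mpr ⟨mem_univ _, Perm.sameCycle_pow_right.mpr hy.2⟩)⟩, ?_⟩
  rintro z ⟨hxz, hz⟩
  exact (Fintype.equivFin ι).injective
    (le_antisymm (hle z y hz (hxz.symm.trans hy.2)) (hmin z (by simpa using hxz)))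

end Transversals

namespace Equiv.Perm

variable {ι : Type*} [DecidableEq ι]

/-- `τ` with `none` inserted into the cycle of `j`, right after `j`. -/
def insertNoneAfter (τ : Perm ι) (j : ι) : Perm (Option ι) :=
  swap none (some (τ j)) * τ.optionCongr

variable (τ : Perm ι) (j : ι)

theorem insertNoneAfter_none : τ.insertNoneAfter j none = some (τ j) := by
  simp [insertNoneAfter]

theorem insertNoneAfter_some_self : τ.insertNoneAfter j (some j) = none := by
  simp [insertNoneAfter]

theorem insertNoneAfter_some_of_ne {y : ι} (h : y ≠ j) :
    τ.insertNoneAfter j (some y) = some (τ y) := by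
  simp [insertNoneAfter, swap_apply_of_ne_of_ne, h]

theorem sign_insertNoneAfter [Fintype ι] : sign (τ.insertNoneAfter j) = -sign τ := by
  simp [insertNoneAfter]

theorem sameCycle_insertNoneAfter_none : (τ.insertNoneAfter j).SameCycle none (some (τ j)) :=
  ⟨1, by rw [zpow_one, insertNoneAfter_none]⟩

theorem insertNoneAfter_pow_some_of_not_sameCycle {y : ι} (h : ¬τ.SameCycle j y) (k : ℕ) :
    (τ.insertNoneAfter j ^ k) (some y) = some ((τ ^ k) y) := by
  induction k with
  | zero => rfl
  | succ k ih =>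
    have hne : (τ ^ k) y ≠ j := fun hk => h (by
      rw [← hk]
      exact sameCycle_pow_left.mpr (.refl _ _))
    rw [pow_succ', mul_apply, ih, insertNoneAfter_some_of_ne _ _ hne, ← mul_apply, ← pow_succ']

variable [Finite ι]

theorem sameCycle_insertNoneAfter_some_iff (x y : ι) :
    (τ.insertNoneAfter j).SameCycle (some x) (some y) ↔ τ.SameCycle x y := by
  have step : ∀ o, (τ.insertNoneAfter j).SameCycle o (τ.insertNoneAfter j o) :=
    fun o => sameCycle_apply_right.mpr (.refl _ _)
  refine ⟨fun h => ?_, SameCycle.map_of_forall_sameCycle fun z => ?_⟩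
  · refine h.map_of_forall_sameCycle (φ := fun o => o.getD (τ j)) fun o => ?_
    rcases o with _ | z
    · rw [insertNoneAfter_none]
      exact .refl _ _
    · by_cases hz : z = j
      · rw [hz, insertNoneAfter_some_self]
        exact sameCycle_apply_right.mpr (.refl _ _)
      · rw [insertNoneAfter_some_of_ne _ _ hz]
        exact sameCycle_apply_right.mpr (.refl _ _)
  · by_cases hz : z = j
    · have h₁ := step (some j)
      rw [insertNoneAfter_some_self] at h₁
      rw [hz]
      exact h₁.trans (sameCycle_insertNoneAfter_none τ j)
    · simpa [insertNoneAfter_some_of_ne _ _ hz] using step (some z)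

theorem cycleProdAt_insertNoneAfter_some_self {A : Type*} [Ring A] (a : ι → A) (d : A) :
    cycleProdAt (fun o => o.elim d a) (τ.insertNoneAfter j) (some j) =
      cycleProdAt (update a j (a j * d)) τ j := by
  set σ := τ.insertNoneAfter j
  obtain ⟨T, hT⟩ := Nat.exists_eq_add_one_of_ne_zero (τ.minimalPeriod_pos_of_finite j).ne'
  have hne : ∀ k < T, (τ ^ k) (τ j) ≠ j := fun k hk h => by
    rw [← mul_apply, ← pow_succ] at h
    have := τ.pow_apply_injOn_minimalPeriod j (j := k + 1) (k := 0) (by omega) (by omega) h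
    omega
  have horbit : ∀ k ≤ T, (σ ^ k) (some (τ j)) = some ((τ ^ k) (τ j)) := by
    intro k
    induction k with
    | zero => intro _; rfl
    | succ k ih =>
      intro hk
      rw [pow_succ', mul_apply, ih (by omega), insertNoneAfter_some_of_ne _ _ (hne k (by omega)),
        ← mul_apply, ← pow_succ']
  have htwo : ∀ k, (σ ^ (k + 2)) (some j) = (σ ^ k) (some (τ j)) := fun k => by
    rw [pow_add, mul_apply, pow_two, mul_apply, insertNoneAfter_some_self, insertNoneAfter_none]
  have hperiod : minimalPeriod σ (some j) = T + 1 + 1 := by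
    refine minimalPeriod_eq_of_pow_apply (by omega) ?_ fun m hm hmT => ?_
    · rw [htwo, horbit T le_rfl, ← mul_apply, ← pow_succ, ← hT, pow_minimalPeriod_apply]
    · obtain _ | _ | k := m
      · omega
      · simp [σ, insertNoneAfter_some_self]
      · rw [htwo, horbit k (by omega)]
        exact fun h => hne k (by omega) (Option.some_injective _ h)
  rw [cycleProdAt_eq_orbitProd, cycleProdAt_eq_orbitProd, hperiod, hT, orbitProd_succ',
    orbitProd_succ', orbitProd_succ', insertNoneAfter_some_self, insertNoneAfter_none,
    update_self, mul_assoc]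
  congr 2
  refine orbitProd_congr fun k hk => ?_
  rw [horbit k hk.le, update_of_ne (hne k hk)]
  rfl

end Equiv.Perm

section Frobenius

variable {ι κ A B : Type*} [Ring A] [CommRing B]

def cycleTerm [Fintype ι] (f : A →ₗ[ℤ] B) (a : ι → A) (σ : Perm ι) : B :=
  ∏ x, if IsCycleMin σ x then f (cycleProdAt a σ x) else 1

theorem frob_eq_sum_cycleTerm [Fintype ι] [DecidableEq ι] (f : A →ₗ[ℤ] B) (a : ι → A) :
    frob f a = ∑ σ : Perm ι, (Perm.sign σ : ℤ) • cycleTerm f a σ := rfl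

theorem frob_unique [Unique ι] [Fintype ι] [DecidableEq ι] (f : A →ₗ[ℤ] B) (a : ι → A) :
    frob f a = f (a default) := by
  have hmin : IsCycleMin (1 : Perm ι) default := fun j => by simp
  have hprod : cycleProdAt a 1 default = a default := by
    rw [cycleProdAt_eq_orbitProd, Perm.coe_one, minimalPeriod_id, orbitProd_one]
  rw [frob_eq_sum_cycleTerm, Fintype.sum_subsingleton _ 1, Perm.sign_one, cycleTerm,
    Fintype.prod_subsingleton _ default, if_pos hmin, hprod, Units.val_one, one_smul]

theorem cycleTerm_update_add [Fintype ι] [DecidableEq ι] (f : A →ₗ[ℤ] B) (a : ι → A) (i : ι)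
    (σ : Perm ι) (u v : A) :
    cycleTerm f (update a i (u + v)) σ =
      cycleTerm f (update a i u) σ + cycleTerm f (update a i v) σ := by
  obtain ⟨x₀, ⟨hix₀, hx₀⟩, huniq⟩ := isCycleTransversal_isCycleMin σ i
  obtain ⟨p, s, hps⟩ := exists_cycleProdAt_update_eq_mul a hix₀.symm
  have hsplit : ∀ c, cycleTerm f (update a i c) σ =
      (∏ x ∈ univ.erase x₀, if IsCycleMin σ x then f (cycleProdAt a σ x) else 1) *
        f (p * c * s) := by
    intro c
    rw [cycleTerm, ← prod_erase_mul _ _ (mem_univ x₀), if_pos hx₀, hps]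
    congr 1
    refine prod_congr rfl fun x hx => ?_
    split_ifs with hx'
    · rw [cycleProdAt_update_of_not_sameCycle a fun h => ne_of_mem_erase hx (huniq x ⟨h, hx'⟩)]
    · rfl
  rw [hsplit, hsplit, hsplit, ← mul_add, mul_add, add_mul, map_add]

def frobUpdateHom [Fintype ι] [DecidableEq ι] (f : A →ₗ[ℤ] B) (a : ι → A) (i : ι) : A →+ B :=
  AddMonoidHom.mk' (fun c => frob f (update a i c)) fun u v => by
    simp only [frob_eq_sum_cycleTerm, cycleTerm_update_add, smul_add, sum_add_distrib]

variable {f : A →ₗ[ℤ] B}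

theorem Central.cycleTerm_eq_of_transversal [Fintype ι] (hf : Central f) (a : ι → A)
    {σ : Perm ι} {p : ι → Prop} (hp : IsCycleTransversal σ p) :
    cycleTerm f a σ = ∏ x, if p x then f (cycleProdAt a σ x) else 1 :=
  (isCycleTransversal_isCycleMin σ).prod_eq hp _ fun _ _ => hf.cycleProdAt_of_sameCycle a

theorem Central.frob_comp_equiv [Fintype ι] [DecidableEq ι] [Fintype κ] [DecidableEq κ]
    (hf : Central f) (a : ι → A) (e : κ ≃ ι) : frob f (fun x => a (e x)) = frob f a := by
  rw [frob_eq_sum_cycleTerm, frob_eq_sum_cycleTerm]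
  refine Fintype.sum_equiv e.permCongr _ _ fun σ => ?_
  rw [Perm.sign_permCongr]
  congr 1
  have hsemi : Semiconj e σ (e.permCongr σ) := fun x => by simp
  have hp := (isCycleTransversal_isCycleMin σ).comp_symm e fun x y =>
    Perm.sameCycle_map_iff e.injective hsemi
  rw [hf.cycleTerm_eq_of_transversal a hp, cycleTerm]
  refine Fintype.prod_equiv e _ _ fun x => ?_
  rw [symm_apply_apply,
    cycleProdAt_map_of_pow_apply e.injective fun k => ((hsemi.iterate_right k) x).symm]

theorem Central.cycleTerm_optionCongr [Fintype ι] [DecidableEq ι] (hf : Central f)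
    (a : ι → A) (d : A) (τ : Perm ι) :
    cycleTerm f (fun o => o.elim d a) τ.optionCongr = f d * cycleTerm f a τ := by
  have hsemi : Semiconj some τ τ.optionCongr := fun _ => rfl
  have hq : IsCycleTransversal τ.optionCongr (fun o => o.elim True (IsCycleMin τ)) := by
    rintro (_ | x)
    · exact ⟨none, ⟨.refl _ _, trivial⟩, fun o ⟨h, _⟩ => (h.eq_of_left rfl).symm⟩
    · obtain ⟨y, ⟨hxy, hy⟩, huniq⟩ := isCycleTransversal_isCycleMin τ x
      refine ⟨some y, ⟨(Perm.sameCycle_map_iff (Option.some_injective _) hsemi).2 hxy, hy⟩, ?_⟩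
      rintro (_ | z) ⟨h, hz⟩
      · exact absurd (h.symm.eq_of_left rfl) (Option.some_ne_none x).symm
      · exact congrArg some
          (huniq z ⟨(Perm.sameCycle_map_iff (Option.some_injective _) hsemi).1 h, hz⟩)
  have hnone : cycleProdAt (fun o => o.elim d a) τ.optionCongr none = d := by
    have hfix : minimalPeriod τ.optionCongr none = 1 := minimalPeriod_eq_one_iff_isFixedPt.mpr rfl
    rw [cycleProdAt_eq_orbitProd, hfix, orbitProd_one]
    rfl
  rw [hf.cycleTerm_eq_of_transversal _ hq, Fintype.prod_option, if_pos (by exact trivial), hnone,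
    cycleTerm]
  congr 1
  refine prod_congr rfl fun y _ => ?_
  rw [cycleProdAt_map_of_pow_apply (Option.some_injective _)
    fun k => ((hsemi.iterate_right k) y).symm]
  rfl

theorem Central.cycleTerm_insertNoneAfter [Fintype ι] [DecidableEq ι] (hf : Central f)
    (a : ι → A) (d : A) (τ : Perm ι) (j : ι) :
    cycleTerm f (fun o => o.elim d a) (τ.insertNoneAfter j) =
      cycleTerm f (update a j (a j * d)) τ := by
  have hp := (isCycleTransversal_isCycleMin τ).withRep j
  rw [hf.cycleTerm_eq_of_transversal _ (hp.option_elim_false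
      (Perm.sameCycle_insertNoneAfter_some_iff τ j) (Perm.sameCycle_insertNoneAfter_none τ j)),
    hf.cycleTerm_eq_of_transversal _ hp, Fintype.prod_option, if_neg (by exact not_false),
    one_mul]
  -- the conditions agree only after unfolding `Option.elim`, so the (classical) instances are
  -- given explicitly
  refine prod_congr rfl fun y _ => @if_ctx_congr _ _ _ (Classical.propDecidable _)
    (Classical.propDecidable _) _ _ _ _ Iff.rfl (fun hy => ?_) fun _ => rfl
  rcases hy with rfl | ⟨hjy, -⟩
  · rw [Perm.cycleProdAt_insertNoneAfter_some_self]
  · rw [cycleProdAt_map_of_pow_apply (Option.some_injective _)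
      (Perm.insertNoneAfter_pow_some_of_not_sameCycle τ j hjy),
      cycleProdAt_update_of_not_sameCycle _ hjy]
    rfl

theorem Central.frob_option [Fintype ι] [DecidableEq ι] (hf : Central f) (a : ι → A) (d : A) :
    frob f (fun o : Option ι => o.elim d a) =
      f d * frob f a - ∑ i, frob f (update a i (a i * d)) := by
  have hnone : ∀ τ : Perm ι, Perm.decomposeOption.symm (none, τ) = τ.optionCongr := fun τ => by
    simp [Perm.decomposeOption_symm_apply, Perm.one_def]
  have hsome : ∀ (τ : Perm ι) (j : ι),
      Perm.decomposeOption.symm (some (τ j), τ) = τ.insertNoneAfter j := fun _ _ => rfl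
  rw [frob_eq_sum_cycleTerm, ← Perm.decomposeOption.symm.sum_comp, Fintype.sum_prod_type,
    Fintype.sum_option, sub_eq_add_neg]
  congr 1
  · rw [frob_eq_sum_cycleTerm, mul_sum]
    refine sum_congr rfl fun τ _ => ?_
    rw [hnone, optionCongr_sign, hf.cycleTerm_optionCongr, mul_smul_comm]
  · simp only [frob_eq_sum_cycleTerm]
    rw [sum_comm, sum_comm (γ := ι), ← sum_neg_distrib]
    refine sum_congr rfl fun τ _ => ?_
    conv_lhs => rw [← Equiv.sum_comp τ]
    rw [← sum_neg_distrib]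
    refine sum_congr rfl fun j _ => ?_
    rw [hsome, Perm.sign_insertNoneAfter, hf.cycleTerm_insertNoneAfter, Units.val_neg, neg_smul]

end Frobenius

section FrobOn

variable {α A B : Type*} [DecidableEq α] [Ring A] [CommRing B] {f : A →ₗ[ℤ] B}

/-- `f_r(v_{p₁}, …, v_{p_r})` for a finite set `s = {p₁, …, p_r}`. -/
def frobOn (f : A →ₗ[ℤ] B) (s : Finset α) (v : α → A) : B :=
  frob f (fun y : {y // y ∈ s} => v y)

theorem frobOn_singleton (f : A →ₗ[ℤ] B) (x : α) (v : α → A) : frobOn f {x} v = f (v x) :=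
  frob_unique f _

theorem frobOn_congr (f : A →ₗ[ℤ] B) (s : Finset α) {v w : α → A} (h : ∀ y ∈ s, v y = w y) :
    frobOn f s v = frobOn f s w :=
  congrArg (frob f) (funext fun y => h y y.2)

theorem frobOn_update_sub_sum {ι : Type*} (f : A →ₗ[ℤ] B) {s : Finset α} {Q : α} (hQ : Q ∈ s)
    (v : α → A) (c : A) (t : Finset ι) (d : ι → A) :
    frobOn f s (update v Q (c - ∑ i ∈ t, d i)) =
      frobOn f s (update v Q c) - ∑ i ∈ t, frobOn f s (update v Q (d i)) := by
  have hhom : ∀ c, frobOn f s (update v Q c) = frobUpdateHom f (fun y : s => v y) ⟨Q, hQ⟩ c :=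
    fun c => congrArg (frob f) (update_comp_eq_of_injective v Subtype.val_injective ⟨Q, hQ⟩ c)
  simp only [hhom, map_sub, map_sum]

theorem Central.frobOn_insert_eq_frob_option (hf : Central f) {s : Finset α} {x : α}
    (hx : x ∉ s) (v : α → A) :
    frobOn f (insert x s) v = frob f (fun o : Option s => o.elim (v x) fun y => v y) := by
  rw [frobOn, ← hf.frob_comp_equiv _ (subtypeInsertEquivOption hx).symm]
  congr 1
  funext o
  cases o <;> rfl

theorem Central.frobOn_insert (hf : Central f) {s : Finset α} {x : α} (hx : x ∉ s)
    (v : α → A) :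
    frobOn f (insert x s) v =
      f (v x) * frobOn f s v - ∑ i ∈ s, frobOn f s (update v i (v i * v x)) := by
  rw [hf.frobOn_insert_eq_frob_option hx, hf.frob_option, ← sum_coe_sort s]
  congr 2
  funext i
  exact congrArg (frob f) (update_comp_eq_of_injective v Subtype.val_injective i _).symm

theorem Central.frobOn_insert_eq_update (hf : Central f) {s : Finset α} {R Q : α}
    (hR : R ∉ s) (hQ : Q ∉ s) (v : α → A) :
    frobOn f (insert R s) v = frobOn f (insert Q s) (update v Q (v R)) := by
  rw [hf.frobOn_insert_eq_frob_option hR, hf.frobOn_insert_eq_frob_option hQ, update_self]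
  congr 1
  funext o
  rcases o with _ | ⟨y, hy⟩
  · rfl
  · exact (update_of_ne (fun h : y = Q => hQ (h ▸ hy)) _ _).symm

end FrobOn

namespace IsSetPartition

variable {α : Type*} [DecidableEq α] {J : Finset α} {ω : Finset (Finset α)} {n : α}

theorem subset_of_mem (hω : IsSetPartition J ω) {Q : Finset α} (hQ : Q ∈ ω) : Q ⊆ J :=
  fun _ hx => hω.2.2 ▸ mem_biUnion.mpr ⟨Q, hQ, hx⟩

theorem notMem_of_mem (hω : IsSetPartition J ω) (hn : n ∉ J) {Q : Finset α} (hQ : Q ∈ ω) :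
    n ∉ Q :=
  fun h => hn (hω.subset_of_mem hQ h)

theorem empty_notMem (hω : IsSetPartition J ω) : ∅ ∉ ω :=
  fun h => not_nonempty_empty (hω.1 _ h)

theorem insert_singleton (hω : IsSetPartition J ω) (hn : n ∉ J) :
    IsSetPartition (insert n J) (insert {n} ω) := by
  refine ⟨?_, ?_, ?_⟩
  · simpa using hω.1
  · simp only [mem_insert]
    rintro P (rfl | hP) R (rfl | hR) hPR
    · exact (hPR rfl).elim
    · exact disjoint_singleton_left.mpr (hω.notMem_of_mem hn hR)
    · exact disjoint_singleton_right.mpr (hω.notMem_of_mem hn hP)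
    · exact hω.2.1 P hP R hR hPR
  · rw [biUnion_insert, hω.2.2]
    rfl

theorem insert_insert_erase (hω : IsSetPartition J ω) (hn : n ∉ J) {Q : Finset α}
    (hQ : Q ∈ ω) : IsSetPartition (insert n J) (insert (insert n Q) (ω.erase Q)) := by
  have hdisj : ∀ R ∈ ω.erase Q, Disjoint (insert n Q) R := fun R hR =>
    disjoint_insert_left.mpr ⟨hω.notMem_of_mem hn (mem_of_mem_erase hR),
      hω.2.1 Q hQ R (mem_of_mem_erase hR) (ne_of_mem_erase hR).symm⟩
  refine ⟨?_, ?_, ?_⟩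
  · simp only [mem_insert]
    rintro P (rfl | hP)
    exacts [insert_nonempty _ _, hω.1 P (mem_of_mem_erase hP)]
  · simp only [mem_insert]
    rintro P (rfl | hP) R (rfl | hR) hPR
    · exact (hPR rfl).elim
    · exact hdisj R hR
    · exact (hdisj P hP).symm
    · exact hω.2.1 P (mem_of_mem_erase hP) R (mem_of_mem_erase hR) hPR
  · conv_rhs => rw [← hω.2.2, ← insert_erase hQ, biUnion_insert]
    rw [biUnion_insert]
    exact insert_union _ _ _

end IsSetPartition

section DelPart

variable {n : ℕ} {σ ω : Finset (Finset ℕ)}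

theorem delPart_insert (hσ : ∀ R ∈ σ, n ∉ R) (P : Finset ℕ) :
    delPart n (insert P σ) = (insert (P.erase n) σ).erase ∅ := by
  rw [delPart, image_insert, (image_congr fun R hR => erase_eq_of_notMem (hσ R hR)).trans
    image_id']

theorem delPart_insert_singleton (hσ : ∀ R ∈ σ, n ∉ R) (hempty : ∅ ∉ σ) :
    delPart n (insert {n} σ) = σ := by
  rw [delPart_insert hσ, erase_singleton, erase_insert hempty]

theorem delPart_insert_insert (hσ : ∀ R ∈ σ, n ∉ R) (hempty : ∅ ∉ σ) {P : Finset ℕ} (hP : n ∉ P)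
    (hPne : P.Nonempty) : delPart n (insert (insert n P) σ) = insert P σ := by
  rw [delPart_insert hσ, erase_insert hP, erase_eq_of_notMem]
  simp [hempty, hPne.ne_empty.symm]

theorem IsSetPartition.eq_of_delPart_eq {J : Finset ℕ} {π : Finset (Finset ℕ)}
    (hπ : IsSetPartition (insert n J) π) (hdel : delPart n π = ω) :
    π = insert {n} ω ∨ ∃ Q ∈ ω, π = insert (insert n Q) (ω.erase Q) := by
  obtain ⟨P, hP, hnP⟩ : ∃ P ∈ π, n ∈ P :=
    mem_biUnion.mp (show n ∈ π.biUnion id by rw [hπ.2.2]; exact mem_insert_self n J)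
  have hdisj : ∀ R ∈ π.erase P, Disjoint R P := fun R hR =>
    hπ.2.1 R (mem_of_mem_erase hR) P hP (ne_of_mem_erase hR)
  have hrest : ∀ R ∈ π.erase P, n ∉ R := fun R hR hnR => disjoint_left.mp (hdisj R hR) hnR hnP
  have hempty : ∅ ∉ π.erase P := fun h => hπ.empty_notMem (mem_of_mem_erase h)
  rw [← insert_erase hP, delPart_insert hrest] at hdel
  by_cases hPn : P.erase n = ∅
  · left
    rw [hPn, erase_insert hempty] at hdel
    have hP' : P = {n} := ((erase_eq_empty_iff P n).mp hPn).resolve_left (ne_empty_of_mem hnP)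
    rw [← insert_erase hP, hdel, hP']
  · right
    rw [erase_eq_of_notMem (by simp [hempty, Ne.symm hPn])] at hdel
    have hQ : P.erase n ∉ π.erase P := fun h =>
      hPn (disjoint_self.mp ((hdisj _ h).mono_right (erase_subset n P)))
    refine ⟨P.erase n, hdel ▸ mem_insert_self _ _, ?_⟩
    rw [← hdel, erase_insert hQ, insert_erase hnP, insert_erase hP]

theorem filter_delPart_eq {J : Finset ℕ} (hω : IsSetPartition J ω) (hn : n ∉ J) :
    ((insert n J).powerset.powerset).filter
        (fun π => IsSetPartition (insert n J) π ∧ delPart n π = ω) =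
      insert (insert {n} ω) (ω.image fun Q => insert (insert n Q) (ω.erase Q)) := by
  have hnω : ∀ Q ∈ ω, n ∉ Q := fun Q hQ => hω.notMem_of_mem hn hQ
  have hsub : ∀ {π}, IsSetPartition (insert n J) π → π ⊆ (insert n J).powerset :=
    fun hπ P hP => mem_powerset.mpr (hπ.subset_of_mem hP)
  ext π
  simp only [mem_filter, mem_powerset, mem_insert, mem_image]
  constructor
  · rintro ⟨-, hπ, hdel⟩
    rcases hπ.eq_of_delPart_eq hdel with h | ⟨Q, hQ, h⟩
    exacts [Or.inl h, Or.inr ⟨Q, hQ, h.symm⟩]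
  · rintro (rfl | ⟨Q, hQ, rfl⟩)
    · have hπ := hω.insert_singleton hn
      exact ⟨hsub hπ, hπ, delPart_insert_singleton hnω hω.empty_notMem⟩
    · have hπ := hω.insert_insert_erase hn hQ
      refine ⟨hsub hπ, hπ, ?_⟩
      rw [delPart_insert_insert (fun R hR => hnω R (mem_of_mem_erase hR))
        (fun h => hω.empty_notMem (mem_of_mem_erase h)) (hnω Q hQ) (hω.1 Q hQ), insert_erase hQ]

theorem insert_singleton_notMem_image (hnω : ∀ Q ∈ ω, n ∉ Q) :
    insert {n} ω ∉ ω.image fun Q => insert (insert n Q) (ω.erase Q) := by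
  rintro h
  obtain ⟨Q, hQ, heq⟩ := mem_image.mp h
  have hQ' : Q ∈ insert (insert n Q) (ω.erase Q) := heq ▸ mem_insert_of_mem hQ
  rcases mem_insert.mp hQ' with h | h
  · exact hnω Q hQ (h ▸ mem_insert_self n Q)
  · exact notMem_erase Q ω h

theorem insert_insert_erase_injOn (hnω : ∀ Q ∈ ω, n ∉ Q) :
    Set.InjOn (fun Q => insert (insert n Q) (ω.erase Q)) ω := by
  intro Q₁ hQ₁ Q₂ hQ₂ heq
  have h : insert n Q₁ ∈ insert (insert n Q₂) (ω.erase Q₂) := by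
    simp only at heq
    exact heq ▸ mem_insert_self _ _
  rcases mem_insert.mp h with h | h
  · simpa [erase_insert (hnω Q₁ hQ₁), erase_insert (hnω Q₂ hQ₂)] using congrArg (erase · n) h
  · exact (hnω _ (mem_of_mem_erase h) (mem_insert_self n Q₁)).elim

end DelPart

theorem frobOn_insert_insert_erase {A B C : Type*} [Ring A] [CommRing B] [CommRing C]
    {g : A →ₗ[ℤ] B} {f : B →ₗ[ℤ] C} (hg : Central g) (hf : Central f) {J : Finset ℕ}
    {ω : Finset (Finset ℕ)} (hω : IsSetPartition J ω) {n : ℕ} (hn : n ∉ J) (a : ℕ → A)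
    {Q : Finset ℕ} (hQ : Q ∈ ω) :
    frobOn f (insert (insert n Q) (ω.erase Q)) (fun P => frobOn g P a) =
      frobOn f ω (update (fun P => frobOn g P a) Q (frobOn g Q a * g (a n))) -
        ∑ i ∈ Q, frobOn f ω (fun P => frobOn g P (update a i (a i * a n))) := by
  have hnQ := hω.notMem_of_mem hn hQ
  have hext := hf.frobOn_insert_eq_update (v := fun P => frobOn g P a)
    (fun h => hω.notMem_of_mem hn (mem_of_mem_erase h) (mem_insert_self n Q)) (notMem_erase Q ω)
  rw [insert_erase hQ] at hext
  rw [hext, hg.frobOn_insert hnQ, mul_comm (g (a n)), frobOn_update_sub_sum f hQ]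
  congr 1
  refine sum_congr rfl fun i hi => frobOn_congr f ω fun P hP => ?_
  rcases eq_or_ne P Q with rfl | hPQ
  · rw [update_self]
  · rw [update_of_ne hPQ]
    refine frobOn_congr g P fun y hy => (update_of_ne ?_ _ _).symm
    rintro rfl
    exact disjoint_left.mp (hω.2.1 P hP Q hQ hPQ) hy hi

/-- For a set partition `ω = {Q₁,…,Q_ℓ}` of `[n−1]`, the sum of `f_k(b_{P₁},…,b_{P_k})`
over all set partitions `π` of `[n]` with `del π = ω` equals
`f(g(aₙ)) · f_ℓ(b_{Q₁},…,b_{Q_ℓ}) − ∑_{i=1}^{n-1} f_ℓ(b_{Q₁}^{(i)},…,b_{Q_ℓ}^{(i)})`. -/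
theorem stmt13 {A B C : Type*} [Ring A] [CommRing B] [CommRing C]
    (g : A →ₗ[ℤ] B) (f : B →ₗ[ℤ] C) (hg : Central g) (hf : Central f)
    (n : ℕ) (hn : 2 ≤ n) (a : ℕ → A)
    (ω : Finset (Finset ℕ)) (hω : IsSetPartition (Finset.Icc 1 (n - 1)) ω) :
    (∑ π ∈ ((Finset.Icc 1 n).powerset.powerset).filter
        (fun π => IsSetPartition (Finset.Icc 1 n) π ∧ delPart n π = ω),
      frob f (fun P : {P // P ∈ π} =>
        frob g (fun x : {x // x ∈ P.1} => a x.1)))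
      = f (g (a n)) *
          frob f (fun Q : {Q // Q ∈ ω} =>
            frob g (fun x : {x // x ∈ Q.1} => a x.1))
        - ∑ i ∈ Finset.Icc 1 (n - 1),
            frob f (fun Q : {Q // Q ∈ ω} =>
              frob g (fun x : {x // x ∈ Q.1} =>
                Function.update a i (a i * a n) x.1)) := by
  have hnJ : n ∉ Icc 1 (n - 1) := by simp only [mem_Icc]; omega
  have hnω : ∀ Q ∈ ω, n ∉ Q := fun Q hQ => hω.notMem_of_mem hnJ hQ
  have hIcc : Icc 1 n = insert n (Icc 1 (n - 1)) := by
    ext x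
    simp only [mem_Icc, mem_insert]
    omega
  change ∑ π ∈ _, frobOn f π (fun P => frobOn g P a) =
    f (g (a n)) * frobOn f ω (fun P => frobOn g P a) -
      ∑ i ∈ Icc 1 (n - 1), frobOn f ω (fun P => frobOn g P (update a i (a i * a n)))
  rw [hIcc, filter_delPart_eq hω hnJ, sum_insert (insert_singleton_notMem_image hnω),
    sum_image (insert_insert_erase_injOn hnω),
    hf.frobOn_insert (fun h => hnω _ h (mem_singleton_self n)), frobOn_singleton]
  rw [sum_congr rfl fun Q hQ => frobOn_insert_insert_erase hg hf hω hnJ a hQ, sum_sub_distrib,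
    ← hω.2.2, sum_biUnion (t := id) fun P hP Q hQ => hω.2.1 P hP Q hQ]
  exact sub_add_sub_cancel _ _ _
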